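/- arXiv:2301.06006 — 2 statements merged into one kernel-verified Lean document; each statement's English description precedes it below -/
import Mathlib

section
/- Let M = M_⊥ ×_λ M_θ be a hemi-slant warped product submanifold of an lcK manifold (M̃^{2n}, J, g). Then for all lifted vector fields X ∈ L(M_⊥) and Z, W ∈ L(M_θ), one has g(h(X,Z), FW) = g(h(X,W), FZ). -/
noncomputable section

/-- An abstract algebraic model of a hemi-slant warped product submanifold `M = M⊥ ×_λ Mθ` of a locally conformal Kähler manifold `(M̃, J, g)`, i.e. a hemi-slant submanifold locally expressed as a warped product of leaves `M⊥` of `D⊥` and `Mθ` of `Dθ`, warped by `λ : M⊥ → (0,∞)`.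

`A` plays the role of the commutative `ℝ`-algebra of smooth real valued functions on the
submanifold `M`, `T` is the `A`-module of tangent vector fields of `M`, and `N` is the
`A`-module of vector fields normal to `M` in the ambient locally conformal Kähler manifold
`(M̃, J, g)`; a vector field of `M̃` along `M` is a pair in `T × N`.  The structure records
the ambient metric `g`, the almost complex structure `J`, directional derivatives `D`, the
ambient Levi-Civita connection `∇̄ = nablaAmb` along `M` (whose tangential and normal parts
give the induced connection, the second fundamental form, the shape operator and the normal
connection via the Gauss and Weingarten formulas), the Lee vector field `B` (with Lee form
`ω = g(B, ·)`, which is closed), the fundamental lcK identity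
`∇̄_U (JV) = J ∇̄_U V + (1/2)(Θ(V) U − ω(V) JU − g(U,V) A + Ω(U,V) B)` (where `Θ = ω ∘ J`,
`A = −J B`, `Ω = g(J·,·)`), and the hemi-slant data: the orthogonal complementary
distributions `D⊥` (totally real) and `Dθ` (slant with slant angle `θ ≠ 0, π/2`). -/
structure HemiSlantWarpedProduct (A : Type*) [CommRing A] [Algebra ℝ A]
    (T : Type*) [AddCommGroup T] [Module A T]
    (N : Type*) [AddCommGroup N] [Module A N] where
  /-- the ambient metric evaluated on vector fields along `M` -/
  g : T × N → T × N → A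
  g_symm : ∀ u v, g u v = g v u
  g_add_left : ∀ u v w, g (u + v) w = g u w + g v w
  g_smul_left : ∀ (a : A) (u v : T × N), g (a • u) v = a * g u v
  /-- tangential and normal fields are orthogonal -/
  g_tangent_normal : ∀ (X : T) (ξ : N), g (X, 0) (0, ξ) = 0
  /-- the ambient almost complex structure along `M` -/
  J : T × N →ₗ[A] T × N
  J_sq : ∀ u, J (J u) = -u
  J_isometry : ∀ u v, g (J u) (J v) = g u v
  /-- directional derivative of functions on `M` along tangent fields -/
  D : T → A → A
  D_add_vec : ∀ X Y a, D (X + Y) a = D X a + D Y a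
  D_smul_vec : ∀ (b : A) (X : T) (a : A), D (b • X) a = b * D X a
  D_add : ∀ X a b, D X (a + b) = D X a + D X b
  D_mul : ∀ X a b, D X (a * b) = a * D X b + b * D X a
  D_const : ∀ (X : T) (r : ℝ), D X (algebraMap ℝ A r) = 0
  /-- the ambient Levi-Civita connection `∇̄` along `M` -/
  nablaAmb : T → T × N → T × N
  nablaAmb_add_vec : ∀ X Y u, nablaAmb (X + Y) u = nablaAmb X u + nablaAmb Y u
  nablaAmb_smul_vec : ∀ (a : A) (X : T) u, nablaAmb (a • X) u = a • nablaAmb X u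
  nablaAmb_add : ∀ X u v, nablaAmb X (u + v) = nablaAmb X u + nablaAmb X v
  nablaAmb_smul : ∀ (X : T) (a : A) u, nablaAmb X (a • u) = D X a • u + a • nablaAmb X u
  /-- `∇̄` is a metric connection -/
  nablaAmb_metric : ∀ X u v, D X (g u v) = g (nablaAmb X u) v + g u (nablaAmb X v)
  /-- the Lie bracket of tangent vector fields of `M` -/
  bracket : T → T → T
  /-- `∇̄` is torsion free (tangential part) -/
  torsion_free : ∀ X Y : T,
    (nablaAmb X (Y, (0 : N))).1 - (nablaAmb Y (X, (0 : N))).1 = bracket X Y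
  /-- the second fundamental form (normal part of `∇̄` on tangent fields) is symmetric -/
  h_symm : ∀ X Y : T, (nablaAmb X (Y, (0 : N))).2 = (nablaAmb Y (X, (0 : N))).2
  /-- the Lee vector field of the lcK structure, along `M` -/
  B : T × N
  /-- the Lee form `ω = g(B, ·)` is closed -/
  lee_closed : ∀ X Y : T,
    D X (g B (Y, (0 : N))) - D Y (g B (X, (0 : N))) = g B (bracket X Y, (0 : N))
  /-- the fundamental identity of a locally conformal Kähler manifold -/
  lck_identity : ∀ (X : T) (v : T × N),
    nablaAmb X (J v) = J (nablaAmb X v)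
      + algebraMap ℝ A (1 / 2) •
          (g B (J v) • ((X, 0) : T × N) - g B v • J (X, 0)
            + g ((X, 0) : T × N) v • J B + g (J ((X, 0) : T × N)) v • B)
  /-- the totally real distribution `D⊥` -/
  Dperp : Submodule A T
  /-- the slant distribution `Dθ` -/
  Dtheta : Submodule A T
  orthogonal : ∀ X ∈ Dperp, ∀ Z ∈ Dtheta, g (X, (0 : N)) (Z, (0 : N)) = 0
  complementary : IsCompl Dperp Dtheta
  /-- `D⊥` is totally real: `J D⊥ ⊆ T⊥M` -/
  totally_real : ∀ X ∈ Dperp, (J (X, (0 : N))).1 = 0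
  /-- the slant angle `θ`, with `θ ≠ 0, π/2` -/
  θ : ℝ
  theta_pos : 0 < θ
  theta_lt_half_pi : θ < Real.pi / 2
  /-- `Dθ` is slant with slant angle `θ`: `P² Z = −cos² θ • Z` -/
  slant : ∀ Z ∈ Dtheta,
    (J ((J (Z, (0 : N))).1, (0 : N))).1 = (-(algebraMap ℝ A (Real.cos θ ^ 2))) • Z
  P_mem_Dtheta : ∀ Z ∈ Dtheta, (J (Z, (0 : N))).1 ∈ Dtheta
  /-- the orthogonal projection of `TM` onto `D⊥` -/
  projPerp : T →ₗ[A] T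
  projPerp_mem : ∀ X, projPerp X ∈ Dperp
  projPerp_id : ∀ X ∈ Dperp, projPerp X = X
  projPerp_zero : ∀ Z ∈ Dtheta, projPerp Z = 0
  /-- the orthogonal projection of `TM` onto `Dθ` -/
  projTheta : T →ₗ[A] T
  projTheta_mem : ∀ X, projTheta X ∈ Dtheta
  projTheta_id : ∀ Z ∈ Dtheta, projTheta Z = Z
  projTheta_zero : ∀ X ∈ Dperp, projTheta X = 0
  /-- the set of lifts to `M = M⊥ ×_λ Mθ` of vector fields on the first factor `M⊥` -/
  Lperp : Set T
  /-- the set of lifts to `M = M⊥ ×_λ Mθ` of vector fields on the second factor `Mθ` -/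
  Ltheta : Set T
  Lperp_sub : ∀ X ∈ Lperp, X ∈ Dperp
  Ltheta_sub : ∀ Z ∈ Ltheta, Z ∈ Dtheta
  Lperp_span : Submodule.span A Lperp = Dperp
  Ltheta_span : Submodule.span A Ltheta = Dtheta
  /-- `ln λ`, where `λ : M⊥ → (0,∞)` is the warping function -/
  lnlam : A
  /-- `λ` is (the lift of) a function on the first factor `M⊥` -/
  lnlam_base : ∀ Z ∈ Ltheta, D Z lnlam = 0
  /-- the (lift of the) gradient vector field `grad (ln λ)` -/
  gradlnlam : T
  gradlnlam_spec : ∀ X : T, g (gradlnlam, (0 : N)) (X, (0 : N)) = D X lnlam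
  /-- the warped product identity `∇_X Z = ∇_Z X = X(ln λ) Z` -/
  warp_mixed : ∀ X ∈ Lperp, ∀ Z ∈ Ltheta,
    (nablaAmb X (Z, (0 : N))).1 = D X lnlam • Z ∧
      (nablaAmb Z (X, (0 : N))).1 = D X lnlam • Z
  /-- the leaves of `D⊥` are totally geodesic in `M` -/
  warp_perp_geodesic : ∀ X ∈ Lperp, ∀ Y ∈ Lperp, (nablaAmb X (Y, (0 : N))).1 ∈ Dperp
  /-- the leaves of `Dθ` are totally umbilic in `M` with mean curvature `−grad (ln λ)` -/
  warp_theta_umbilic : ∀ Z ∈ Ltheta, ∀ W ∈ Ltheta,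
    (nablaAmb Z (W, (0 : N))).1 + g (Z, (0 : N)) (W, (0 : N)) • gradlnlam ∈ Dtheta

namespace HemiSlantWarpedProduct

variable {A : Type*} [CommRing A] [Algebra ℝ A]
  {T : Type*} [AddCommGroup T] [Module A T]
  {N : Type*} [AddCommGroup N] [Module A N]

/-- The induced Levi-Civita connection `∇` of `M` (tangential part of the Gauss formula). -/
def nabla (S : HemiSlantWarpedProduct A T N) (X Y : T) : T := (S.nablaAmb X (Y, 0)).1

/-- The second fundamental form `h` of `M` in `M̃` (normal part of the Gauss formula). -/
def h (S : HemiSlantWarpedProduct A T N) (X Y : T) : N := (S.nablaAmb X (Y, 0)).2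

/-- The shape operator `𝔄_ξ` of `M` in `M̃` (Weingarten formula). -/
def shape (S : HemiSlantWarpedProduct A T N) (ξ : N) (X : T) : T := -(S.nablaAmb X (0, ξ)).1

/-- The normal connection `∇⊥` of `M` in `M̃` (Weingarten formula). -/
def nablaPerp (S : HemiSlantWarpedProduct A T N) (X : T) (ξ : N) : N := (S.nablaAmb X (0, ξ)).2

/-- The tangential part `P` of `J` on tangent vector fields. -/
def P (S : HemiSlantWarpedProduct A T N) (X : T) : T := (S.J (X, 0)).1

/-- The normal part `F` of `J` on tangent vector fields. -/
def F (S : HemiSlantWarpedProduct A T N) (X : T) : N := (S.J (X, 0)).2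

end HemiSlantWarpedProduct

namespace HemiSlantWarpedProduct

variable {A : Type*} [CommRing A] [Algebra ℝ A]
  {T : Type*} [AddCommGroup T] [Module A T]
  {N : Type*} [AddCommGroup N] [Module A N]

set_option linter.unusedSectionVars false in
private lemma pair_split (p : T × N) : p = (p.1, 0) + (0, p.2) := by
  cases p with
  | mk a b => simp [Prod.mk_add_mk]

private lemma smul_pair (a : A) (U : T) : ((a • U, (0 : N)) : T × N) = a • ((U, (0 : N)) : T × N) := by
  simp [Prod.smul_mk]

variable (S : HemiSlantWarpedProduct A T N)

lemma g_add_right (u v w : T × N) : S.g u (v + w) = S.g u v + S.g u w := by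
  rw [S.g_symm u (v + w), S.g_add_left, S.g_symm v u, S.g_symm w u]

lemma g_smul_right (a : A) (u v : T × N) : S.g u (a • v) = a * S.g u v := by
  rw [S.g_symm u (a • v), S.g_smul_left, S.g_symm v u]

lemma g_zero_left (v : T × N) : S.g 0 v = 0 := by
  have h := S.g_add_left 0 0 v
  rw [add_zero] at h
  exact left_eq_add.mp h

lemma g_zero_right (u : T × N) : S.g u 0 = 0 := by
  rw [S.g_symm]; exact S.g_zero_left u

lemma g_neg_right (u v : T × N) : S.g u (-v) = - S.g u v := by
  have h := S.g_add_right u v (-v)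
  rw [add_neg_cancel, S.g_zero_right] at h
  linear_combination -h

lemma g_sub_right (u v w : T × N) : S.g u (v - w) = S.g u v - S.g u w := by
  rw [sub_eq_add_neg, S.g_add_right, S.g_neg_right, sub_eq_add_neg]

lemma g_J_left (u v : T × N) : S.g (S.J u) v = - S.g u (S.J v) := by
  have h := S.J_isometry u (S.J v)
  rw [S.J_sq, S.g_neg_right] at h
  linear_combination -h

lemma g_J_right (u v : T × N) : S.g u (S.J v) = - S.g (S.J u) v := by
  rw [S.g_J_left]; ring

lemma D_zero (V : T) : S.D V 0 = 0 := by
  have h := S.D_add V 0 0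
  rw [add_zero] at h
  exact left_eq_add.mp h

lemma D_neg (V : T) (a : A) : S.D V (-a) = - S.D V a := by
  have h := S.D_add V a (-a)
  rw [add_neg_cancel, S.D_zero] at h
  linear_combination -h

lemma D_algmul (V : T) (r : ℝ) (a : A) :
    S.D V (algebraMap ℝ A r * a) = algebraMap ℝ A r * S.D V a := by
  rw [S.D_mul, S.D_const, mul_zero, add_zero]

lemma nablaAmb_zero_vec (u : T × N) : S.nablaAmb 0 u = 0 := by
  have h := S.nablaAmb_smul_vec 0 0 u
  rw [zero_smul, zero_smul] at h
  exact h

lemma g_split_left (p v : T × N) : S.g p v = S.g (p.1, 0) v + S.g (0, p.2) v := by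
  conv_lhs => rw [pair_split p]
  rw [S.g_add_left]

lemma g_split_right (u p : T × N) : S.g u p = S.g u (p.1, 0) + S.g u (0, p.2) := by
  rw [S.g_symm u p, S.g_split_left, S.g_symm (p.1, 0) u, S.g_symm (0, p.2) u]

lemma g_tan_left (p : T × N) (V : T) :
    S.g p ((V, (0 : N)) : T × N) = S.g (p.1, 0) ((V, (0 : N)) : T × N) := by
  rw [S.g_split_left, S.g_symm ((0 : T), p.2) ((V, (0 : N)) : T × N), S.g_tangent_normal, add_zero]

lemma g_tan_right (V : T) (p : T × N) :
    S.g ((V, (0 : N)) : T × N) p = S.g ((V, (0 : N)) : T × N) (p.1, 0) := by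
  rw [S.g_split_right, S.g_tangent_normal, add_zero]

lemma g_norm_right (ξ : N) (p : T × N) :
    S.g (((0 : T), ξ) : T × N) p = S.g (((0 : T), ξ) : T × N) (0, p.2) := by
  rw [S.g_split_right, S.g_symm (((0 : T), ξ) : T × N) (p.1, 0), S.g_tangent_normal, zero_add]

lemma g_norm_left (p : T × N) (ξ : N) :
    S.g p (((0 : T), ξ) : T × N) = S.g (0, p.2) (((0 : T), ξ) : T × N) := by
  rw [S.g_split_left, S.g_tangent_normal, zero_add]

/-- `g(JU, V)` for tangent `U`, `V`, i.e. `g(PU, V) = Ω(U,V)`. -/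
def gJ (S : HemiSlantWarpedProduct A T N) (U V : T) : A :=
  S.g (S.J ((U, (0 : N)) : T × N)) ((V, (0 : N)) : T × N)

lemma gJ_def (U V : T) :
    S.gJ U V = S.g (S.J ((U, (0 : N)) : T × N)) ((V, (0 : N)) : T × N) := rfl

lemma g_pair_J (U V : T) :
    S.g ((U, (0 : N)) : T × N) (S.J ((V, (0 : N)) : T × N)) = - S.gJ U V := by
  rw [S.g_J_right]; rfl

lemma gJ_skew (U V : T) : S.gJ U V = - S.gJ V U := by
  rw [S.gJ_def, S.g_J_left, S.g_symm ((U, (0 : N)) : T × N) (S.J ((V, (0 : N)) : T × N))]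
  rfl

lemma gJ_smul_left (a : A) (U V : T) : S.gJ (a • U) V = a * S.gJ U V := by
  rw [S.gJ_def, smul_pair, map_smul, S.g_smul_left]; rfl

lemma gJ_smul_right (a : A) (U V : T) : S.gJ U (a • V) = a * S.gJ U V := by
  rw [S.gJ_def, smul_pair, S.g_smul_right]; rfl

lemma g_P_left (U V : T) :
    S.g (((S.J ((U, (0 : N)) : T × N)).1, (0 : N)) : T × N) ((V, (0 : N)) : T × N) = S.gJ U V := by
  rw [← S.g_tan_left (S.J ((U, (0 : N)) : T × N)) V]; rfl

lemma g_P_right (U V : T) :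
    S.g ((U, (0 : N)) : T × N) (((S.J ((V, (0 : N)) : T × N)).1, (0 : N)) : T × N) = - S.gJ U V := by
  rw [← S.g_tan_right U (S.J ((V, (0 : N)) : T × N))]
  exact S.g_pair_J U V

lemma Jperp {X : T} (hXp : X ∈ S.Dperp) :
    S.J ((X, (0 : N)) : T × N) = ((0 : T), (S.J ((X, (0 : N)) : T × N)).2) := by
  conv_lhs => rw [← Prod.mk.eta (p := S.J ((X, (0 : N)) : T × N))]
  rw [S.totally_real X hXp]

lemma gXJ_theta {X V : T} (hXp : X ∈ S.Dperp) (hV : V ∈ S.Dtheta) :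
    S.g ((X, (0 : N)) : T × N) (S.J ((V, (0 : N)) : T × N)) = 0 := by
  rw [S.g_tan_right X (S.J ((V, (0 : N)) : T × N))]
  exact S.orthogonal X hXp _ (S.P_mem_Dtheta V hV)

/-- the mixed warped product identity, extended to all of `Dθ` by tensoriality. -/
lemma warpV {X : T} (hX : X ∈ S.Lperp) {V : T} (hV : V ∈ S.Dtheta) :
    (S.nablaAmb V ((X, (0 : N)) : T × N)).1 = S.D X S.lnlam • V := by
  rw [← S.Ltheta_span] at hV
  induction hV using Submodule.span_induction with
  | mem Z hZ => exact (S.warp_mixed X hX Z hZ).2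
  | zero => rw [S.nablaAmb_zero_vec]; simp
  | add x y hx hy ihx ihy =>
      rw [S.nablaAmb_add_vec, Prod.fst_add, ihx, ihy, smul_add]
  | smul a x hx ih =>
      rw [S.nablaAmb_smul_vec, Prod.smul_fst, ih, smul_smul, smul_smul, mul_comm]

/-- metric compatibility applied to `g(∇̄_X U, W)` for lifted `W ∈ L(Mθ)`. -/
lemma gnab {X : T} (hX : X ∈ S.Lperp) {W : T} (hW : W ∈ S.Ltheta) (U : T) :
    S.g (((S.nablaAmb X ((U, (0 : N)) : T × N)).1, (0 : N)) : T × N) ((W, (0 : N)) : T × N)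
      = S.D X (S.g ((U, (0 : N)) : T × N) ((W, (0 : N)) : T × N))
        - S.D X S.lnlam * S.g ((U, (0 : N)) : T × N) ((W, (0 : N)) : T × N) := by
  have hm := S.nablaAmb_metric X ((U, (0 : N)) : T × N) ((W, (0 : N)) : T × N)
  rw [S.g_tan_left (S.nablaAmb X ((U, (0 : N)) : T × N)) W,
      S.g_tan_right U (S.nablaAmb X ((W, (0 : N)) : T × N)),
      (S.warp_mixed X hX W hW).1, smul_pair, S.g_smul_right] at hm
  linear_combination -hm

/-- the key identity obtained by differentiating `g(X, JW) = 0` along `V ∈ Dθ`,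
using the lcK identity and the warped product structure. -/
lemma keyII {X : T} (hX : X ∈ S.Lperp) {V W : T} (hV : V ∈ S.Dtheta) (hW : W ∈ S.Dtheta) :
    S.g ((0 : T), (S.nablaAmb X ((V, (0 : N)) : T × N)).2)
        ((0 : T), (S.J ((W, (0 : N)) : T × N)).2)
      = S.D X S.lnlam * S.gJ V W
        + S.g ((0 : T), (S.J ((X, (0 : N)) : T × N)).2)
            ((0 : T), (S.nablaAmb V ((W, (0 : N)) : T × N)).2)
        - algebraMap ℝ A (1 / 2) *
            (S.g ((V, (0 : N)) : T × N) ((W, (0 : N)) : T × N)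
                * S.g ((X, (0 : N)) : T × N) (S.J S.B)
              + S.gJ V W * S.g ((X, (0 : N)) : T × N) S.B) := by
  have hXp : X ∈ S.Dperp := S.Lperp_sub X hX
  have hA : S.g (S.nablaAmb V ((X, (0 : N)) : T × N)) (S.J ((W, (0 : N)) : T × N))
      = S.D X S.lnlam * (- S.gJ V W)
        + S.g ((0 : T), (S.nablaAmb X ((V, (0 : N)) : T × N)).2)
            ((0 : T), (S.J ((W, (0 : N)) : T × N)).2) := by
    conv_lhs => rw [pair_split (S.nablaAmb V ((X, (0 : N)) : T × N))]
    rw [S.g_add_left, S.warpV hX hV, smul_pair, S.g_smul_left, S.g_pair_J,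
      S.g_norm_right ((S.nablaAmb V ((X, (0 : N)) : T × N)).2) (S.J ((W, (0 : N)) : T × N)),
      S.h_symm V X]
  have h1 : S.g ((X, (0 : N)) : T × N) (S.J (S.nablaAmb V ((W, (0 : N)) : T × N)))
      = - S.g ((0 : T), (S.J ((X, (0 : N)) : T × N)).2)
          ((0 : T), (S.nablaAmb V ((W, (0 : N)) : T × N)).2) := by
    conv_lhs =>
      rw [S.g_J_right ((X, (0 : N)) : T × N) (S.nablaAmb V ((W, (0 : N)) : T × N)),
        S.Jperp hXp,
        S.g_norm_right ((S.J ((X, (0 : N)) : T × N)).2) (S.nablaAmb V ((W, (0 : N)) : T × N))]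
  have h2 : S.g ((X, (0 : N)) : T × N)
      (S.g S.B (S.J ((W, (0 : N)) : T × N)) • ((V, (0 : N)) : T × N)
        - S.g S.B ((W, (0 : N)) : T × N) • S.J ((V, (0 : N)) : T × N)
        + S.g ((V, (0 : N)) : T × N) ((W, (0 : N)) : T × N) • S.J S.B
        + S.g (S.J ((V, (0 : N)) : T × N)) ((W, (0 : N)) : T × N) • S.B)
      = S.g ((V, (0 : N)) : T × N) ((W, (0 : N)) : T × N)
            * S.g ((X, (0 : N)) : T × N) (S.J S.B)
          + S.gJ V W * S.g ((X, (0 : N)) : T × N) S.B := by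
    rw [S.g_add_right, S.g_add_right, S.g_sub_right, S.g_smul_right, S.g_smul_right,
      S.g_smul_right, S.g_smul_right, S.orthogonal X hXp V hV, S.gXJ_theta hXp hV]
    rw [S.gJ_def]
    ring
  have hm := S.nablaAmb_metric V ((X, (0 : N)) : T × N) (S.J ((W, (0 : N)) : T × N))
  rw [S.gXJ_theta hXp hW, S.D_zero, hA, S.lck_identity V ((W, (0 : N)) : T × N),
    S.g_add_right, S.g_smul_right, h1, h2] at hm
  linear_combination -hm

/-- antisymmetrized form of `keyII`. -/
lemma keyAS {X : T} (hX : X ∈ S.Lperp) {V W : T} (hV : V ∈ S.Dtheta) (hW : W ∈ S.Dtheta) :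
    S.g ((0 : T), (S.nablaAmb X ((V, (0 : N)) : T × N)).2)
        ((0 : T), (S.J ((W, (0 : N)) : T × N)).2)
      - S.g ((0 : T), (S.nablaAmb X ((W, (0 : N)) : T × N)).2)
          ((0 : T), (S.J ((V, (0 : N)) : T × N)).2)
      = (2 * S.D X S.lnlam - S.g ((X, (0 : N)) : T × N) S.B) * S.gJ V W := by
  have h1 := S.keyII hX hV hW
  have h2 := S.keyII hX hW hV
  rw [S.h_symm W V, S.gJ_skew W V,
    S.g_symm ((W, (0 : N)) : T × N) ((V, (0 : N)) : T × N)] at h2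
  have h12 : algebraMap ℝ A (1 / 2) * 2 = 1 := by
    rw [show ((2 : A)) = algebraMap ℝ A 2 from (map_ofNat (algebraMap ℝ A) 2).symm, ← map_mul]
    norm_num
  linear_combination h1 - h2
    - (S.g ((X, (0 : N)) : T × N) S.B * S.gJ V W) * h12

/-- the identity obtained by differentiating `g(U, JV)` along `X`, for `U, V ∈ Dθ`. -/
lemma keyI {X : T} (hXp : X ∈ S.Dperp) {U V : T} (hU : U ∈ S.Dtheta) (hV : V ∈ S.Dtheta) :
    S.g ((0 : T), (S.nablaAmb X ((U, (0 : N)) : T × N)).2)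
        ((0 : T), (S.J ((V, (0 : N)) : T × N)).2)
      - S.g ((0 : T), (S.nablaAmb X ((V, (0 : N)) : T × N)).2)
          ((0 : T), (S.J ((U, (0 : N)) : T × N)).2)
      = - S.D X (S.gJ U V)
        + S.gJ ((S.nablaAmb X ((U, (0 : N)) : T × N)).1) V
        + S.gJ U ((S.nablaAmb X ((V, (0 : N)) : T × N)).1) := by
  have hA : S.g (S.nablaAmb X ((U, (0 : N)) : T × N)) (S.J ((V, (0 : N)) : T × N))
      = - S.gJ ((S.nablaAmb X ((U, (0 : N)) : T × N)).1) V
        + S.g ((0 : T), (S.nablaAmb X ((U, (0 : N)) : T × N)).2)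
            ((0 : T), (S.J ((V, (0 : N)) : T × N)).2) := by
    conv_lhs => rw [pair_split (S.nablaAmb X ((U, (0 : N)) : T × N))]
    rw [S.g_add_left, S.g_pair_J,
      S.g_norm_right ((S.nablaAmb X ((U, (0 : N)) : T × N)).2) (S.J ((V, (0 : N)) : T × N))]
  have h1 : S.g ((U, (0 : N)) : T × N) (S.J (S.nablaAmb X ((V, (0 : N)) : T × N)))
      = - (S.gJ U ((S.nablaAmb X ((V, (0 : N)) : T × N)).1)
          + S.g ((0 : T), (S.nablaAmb X ((V, (0 : N)) : T × N)).2)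
              ((0 : T), (S.J ((U, (0 : N)) : T × N)).2)) := by
    rw [S.g_J_right ((U, (0 : N)) : T × N) (S.nablaAmb X ((V, (0 : N)) : T × N)),
      S.g_split_right (S.J ((U, (0 : N)) : T × N)) (S.nablaAmb X ((V, (0 : N)) : T × N)),
      S.g_norm_left (S.J ((U, (0 : N)) : T × N)) ((S.nablaAmb X ((V, (0 : N)) : T × N)).2),
      S.g_symm ((0 : T), (S.J ((U, (0 : N)) : T × N)).2)
        ((0 : T), (S.nablaAmb X ((V, (0 : N)) : T × N)).2)]
    rfl
  have h2 : S.g ((U, (0 : N)) : T × N)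
      (S.g S.B (S.J ((V, (0 : N)) : T × N)) • ((X, (0 : N)) : T × N)
        - S.g S.B ((V, (0 : N)) : T × N) • S.J ((X, (0 : N)) : T × N)
        + S.g ((X, (0 : N)) : T × N) ((V, (0 : N)) : T × N) • S.J S.B
        + S.g (S.J ((X, (0 : N)) : T × N)) ((V, (0 : N)) : T × N) • S.B) = 0 := by
    rw [S.g_add_right, S.g_add_right, S.g_sub_right, S.g_smul_right, S.g_smul_right,
      S.g_smul_right, S.g_smul_right, S.g_symm ((U, (0 : N)) : T × N) ((X, (0 : N)) : T × N),
      S.orthogonal X hXp U hU, S.orthogonal X hXp V hV, S.Jperp hXp, S.g_tangent_normal,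
      S.g_symm (((0 : T), (S.J ((X, (0 : N)) : T × N)).2) : T × N) ((V, (0 : N)) : T × N),
      S.g_tangent_normal]
    ring
  have hm := S.nablaAmb_metric X ((U, (0 : N)) : T × N) (S.J ((V, (0 : N)) : T × N))
  rw [S.g_pair_J, S.D_neg, hA, S.lck_identity X ((V, (0 : N)) : T × N),
    S.g_add_right, S.g_smul_right, h1, h2] at hm
  linear_combination -hm

end HemiSlantWarpedProduct

/-- Let `M = M⊥ ×_λ Mθ` be a hemi-slant warped product submanifold of an lcK manifold. Then for all `X ∈ L(M⊥)` and `Z, W ∈ L(Mθ)`, `g(h(X,Z), FW) = g(h(X,W), FZ)`. -/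
theorem HemiSlantWarpedProduct.g_h_F_symm {A : Type*} [CommRing A] [Algebra ℝ A]
    {T : Type*} [AddCommGroup T] [Module A T]
    {N : Type*} [AddCommGroup N] [Module A N]
    (S : HemiSlantWarpedProduct A T N) {X Z W : T}
    (hX : X ∈ S.Lperp) (hZ : Z ∈ S.Ltheta) (hW : W ∈ S.Ltheta) :
    S.g (0, S.h X Z) (0, S.F W) = S.g (0, S.h X W) (0, S.F Z) := by
  have hXp : X ∈ S.Dperp := S.Lperp_sub X hX
  have hZd : Z ∈ S.Dtheta := S.Ltheta_sub Z hZ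
  have hWd : W ∈ S.Dtheta := S.Ltheta_sub W hW
  have hpz : (S.J ((Z, (0 : N)) : T × N)).1 ∈ S.Dtheta := S.P_mem_Dtheta Z hZd
  have hpw : (S.J ((W, (0 : N)) : T × N)).1 ∈ S.Dtheta := S.P_mem_Dtheta W hWd
  -- step 1: `D X (gJ Z W) = ω(X) * gJ Z W` for lifts
  have hI := S.keyI hXp hZd hWd
  rw [(S.warp_mixed X hX Z hZ).1, (S.warp_mixed X hX W hW).1,
    S.gJ_smul_left, S.gJ_smul_right] at hI
  have hAS := S.keyAS hX hZd hWd
  have hDg : S.D X (S.gJ Z W) = S.g ((X, (0 : N)) : T × N) S.B * S.gJ Z W := by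
    linear_combination hI - hAS
  -- step 2: the four `P`-shifted facts
  have f1 : S.gJ ((S.J ((Z, (0 : N)) : T × N)).1) ((S.J ((W, (0 : N)) : T × N)).1)
      = algebraMap ℝ A (Real.cos S.θ ^ 2) * S.gJ Z W := by
    rw [S.gJ_def ((S.J ((Z, (0 : N)) : T × N)).1) ((S.J ((W, (0 : N)) : T × N)).1),
      S.g_tan_left, S.slant Z hZd, smul_pair, S.g_smul_left, S.g_P_right]
    ring
  have f2 : S.gJ ((S.nablaAmb X (((S.J ((Z, (0 : N)) : T × N)).1, (0 : N)) : T × N)).1)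
        ((S.J ((W, (0 : N)) : T × N)).1)
      = algebraMap ℝ A (Real.cos S.θ ^ 2)
          * (S.D X (S.gJ Z W) - S.D X S.lnlam * S.gJ Z W) := by
    rw [S.gJ_def
        ((S.nablaAmb X (((S.J ((Z, (0 : N)) : T × N)).1, (0 : N)) : T × N)).1)
        ((S.J ((W, (0 : N)) : T × N)).1),
      S.g_J_left, S.g_tan_right, S.slant W hWd, smul_pair, S.g_smul_right,
      S.gnab hX hW ((S.J ((Z, (0 : N)) : T × N)).1), S.g_P_left]
    ring
  have f3 : S.gJ ((S.J ((Z, (0 : N)) : T × N)).1)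
        ((S.nablaAmb X (((S.J ((W, (0 : N)) : T × N)).1, (0 : N)) : T × N)).1)
      = algebraMap ℝ A (Real.cos S.θ ^ 2)
          * (S.D X (S.gJ Z W) - S.D X S.lnlam * S.gJ Z W) := by
    rw [S.gJ_def ((S.J ((Z, (0 : N)) : T × N)).1)
        ((S.nablaAmb X (((S.J ((W, (0 : N)) : T × N)).1, (0 : N)) : T × N)).1),
      S.g_tan_left, S.slant Z hZd, smul_pair, S.g_smul_left,
      S.g_symm ((Z, (0 : N)) : T × N)
        (((S.nablaAmb X (((S.J ((W, (0 : N)) : T × N)).1, (0 : N)) : T × N)).1, (0 : N)) : T × N),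
      S.gnab hX hZ ((S.J ((W, (0 : N)) : T × N)).1), S.g_P_left, S.gJ_skew W Z, S.D_neg]
    ring
  have f4 : S.D X (S.gJ ((S.J ((Z, (0 : N)) : T × N)).1) ((S.J ((W, (0 : N)) : T × N)).1))
      = algebraMap ℝ A (Real.cos S.θ ^ 2) * S.D X (S.gJ Z W) := by
    rw [f1, S.D_algmul]
  -- step 3: evaluate the antisymmetrized identities at `(PZ, PW)`
  have f5 := S.keyI hXp hpz hpw
  have f6 := S.keyAS hX hpz hpw
  have hkey : (2 : A) * algebraMap ℝ A (Real.cos S.θ ^ 2)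
      * ((2 * S.D X S.lnlam - S.g ((X, (0 : N)) : T × N) S.B) * S.gJ Z W) = 0 := by
    linear_combination f5 - f6 - f4 + f2 + f3
      - (2 * S.D X S.lnlam - S.g ((X, (0 : N)) : T × N) S.B) * f1
      + algebraMap ℝ A (Real.cos S.θ ^ 2) * hDg
  -- step 4: `2 cos² θ` is invertible
  have hcos : Real.cos S.θ ≠ 0 := by
    have h1 : 0 < Real.cos S.θ :=
      Real.cos_pos_of_mem_Ioo ⟨by linarith [S.theta_pos, Real.pi_pos], S.theta_lt_half_pi⟩
    exact ne_of_gt h1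
  have hne : (2 * Real.cos S.θ ^ 2 : ℝ) ≠ 0 :=
    mul_ne_zero two_ne_zero (pow_ne_zero 2 hcos)
  have hinv : algebraMap ℝ A ((2 * Real.cos S.θ ^ 2)⁻¹)
      * ((2 : A) * algebraMap ℝ A (Real.cos S.θ ^ 2)) = 1 := by
    rw [show ((2 : A)) = algebraMap ℝ A 2 from (map_ofNat (algebraMap ℝ A) 2).symm,
      ← map_mul, ← map_mul, inv_mul_cancel₀ hne, map_one]
  have hzero : (2 * S.D X S.lnlam - S.g ((X, (0 : N)) : T × N) S.B) * S.gJ Z W = 0 := by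
    linear_combination algebraMap ℝ A ((2 * Real.cos S.θ ^ 2)⁻¹) * hkey
      - ((2 * S.D X S.lnlam - S.g ((X, (0 : N)) : T × N) S.B) * S.gJ Z W) * hinv
  -- step 5: conclude
  have hfin := S.keyAS hX hZd hWd
  rw [hzero] at hfin
  show S.g ((0 : T), (S.nablaAmb X ((Z, (0 : N)) : T × N)).2)
        ((0 : T), (S.J ((W, (0 : N)) : T × N)).2)
      = S.g ((0 : T), (S.nablaAmb X ((W, (0 : N)) : T × N)).2)
          ((0 : T), (S.J ((Z, (0 : N)) : T × N)).2)
  linear_combination hfin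
end
end

section
/- Let M = M_θ ×_λ M_⊥ be a warped product hemi-slant submanifold of an lcK manifold (M̃^{2n}, J, g). Then for all lifted vector fields X ∈ L(M_⊥) and Z, W ∈ L(M_θ), one has g(h(X,Z), FW) = g(h(X,W), FZ). -/
noncomputable section

/-- An abstract algebraic model of a warped product hemi-slant submanifold `M = Mθ ×_λ M⊥` of a locally conformal Kähler manifold `(M̃, J, g)`, i.e. a hemi-slant submanifold locally expressed as a warped product of leaves `Mθ` of `Dθ` and `M⊥` of `D⊥`, warped by `λ : Mθ → (0,∞)`.

`A` plays the role of the commutative `ℝ`-algebra of smooth real valued functions on the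
submanifold `M`, `T` is the `A`-module of tangent vector fields of `M`, and `N` is the
`A`-module of vector fields normal to `M` in the ambient locally conformal Kähler manifold
`(M̃, J, g)`; a vector field of `M̃` along `M` is a pair in `T × N`.  The structure records
the ambient metric `g`, the almost complex structure `J`, directional derivatives `D`, the
ambient Levi-Civita connection `∇̄ = nablaAmb` along `M` (whose tangential and normal parts
give the induced connection, the second fundamental form, the shape operator and the normal
connection via the Gauss and Weingarten formulas), the Lee vector field `B` (with Lee form
`ω = g(B, ·)`, which is closed), the fundamental lcK identity
`∇̄_U (JV) = J ∇̄_U V + (1/2)(Θ(V) U − ω(V) JU − g(U,V) A + Ω(U,V) B)` (where `Θ = ω ∘ J`,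
`A = −J B`, `Ω = g(J·,·)`), and the hemi-slant data: the orthogonal complementary
distributions `D⊥` (totally real) and `Dθ` (slant with slant angle `θ ≠ 0, π/2`). -/
structure WarpedProductHemiSlant (A : Type*) [CommRing A] [Algebra ℝ A]
    (T : Type*) [AddCommGroup T] [Module A T]
    (N : Type*) [AddCommGroup N] [Module A N] where
  /-- the ambient metric evaluated on vector fields along `M` -/
  g : T × N → T × N → A
  g_symm : ∀ u v, g u v = g v u
  g_add_left : ∀ u v w, g (u + v) w = g u w + g v w
  g_smul_left : ∀ (a : A) (u v : T × N), g (a • u) v = a * g u v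
  /-- tangential and normal fields are orthogonal -/
  g_tangent_normal : ∀ (X : T) (ξ : N), g (X, 0) (0, ξ) = 0
  /-- the ambient almost complex structure along `M` -/
  J : T × N →ₗ[A] T × N
  J_sq : ∀ u, J (J u) = -u
  J_isometry : ∀ u v, g (J u) (J v) = g u v
  /-- directional derivative of functions on `M` along tangent fields -/
  D : T → A → A
  D_add_vec : ∀ X Y a, D (X + Y) a = D X a + D Y a
  D_smul_vec : ∀ (b : A) (X : T) (a : A), D (b • X) a = b * D X a
  D_add : ∀ X a b, D X (a + b) = D X a + D X b
  D_mul : ∀ X a b, D X (a * b) = a * D X b + b * D X a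
  D_const : ∀ (X : T) (r : ℝ), D X (algebraMap ℝ A r) = 0
  /-- the ambient Levi-Civita connection `∇̄` along `M` -/
  nablaAmb : T → T × N → T × N
  nablaAmb_add_vec : ∀ X Y u, nablaAmb (X + Y) u = nablaAmb X u + nablaAmb Y u
  nablaAmb_smul_vec : ∀ (a : A) (X : T) u, nablaAmb (a • X) u = a • nablaAmb X u
  nablaAmb_add : ∀ X u v, nablaAmb X (u + v) = nablaAmb X u + nablaAmb X v
  nablaAmb_smul : ∀ (X : T) (a : A) u, nablaAmb X (a • u) = D X a • u + a • nablaAmb X u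
  /-- `∇̄` is a metric connection -/
  nablaAmb_metric : ∀ X u v, D X (g u v) = g (nablaAmb X u) v + g u (nablaAmb X v)
  /-- the Lie bracket of tangent vector fields of `M` -/
  bracket : T → T → T
  /-- `∇̄` is torsion free (tangential part) -/
  torsion_free : ∀ X Y : T,
    (nablaAmb X (Y, (0 : N))).1 - (nablaAmb Y (X, (0 : N))).1 = bracket X Y
  /-- the second fundamental form (normal part of `∇̄` on tangent fields) is symmetric -/
  h_symm : ∀ X Y : T, (nablaAmb X (Y, (0 : N))).2 = (nablaAmb Y (X, (0 : N))).2
  /-- the Lee vector field of the lcK structure, along `M` -/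
  B : T × N
  /-- the Lee form `ω = g(B, ·)` is closed -/
  lee_closed : ∀ X Y : T,
    D X (g B (Y, (0 : N))) - D Y (g B (X, (0 : N))) = g B (bracket X Y, (0 : N))
  /-- the fundamental identity of a locally conformal Kähler manifold -/
  lck_identity : ∀ (X : T) (v : T × N),
    nablaAmb X (J v) = J (nablaAmb X v)
      + algebraMap ℝ A (1 / 2) •
          (g B (J v) • ((X, 0) : T × N) - g B v • J (X, 0)
            + g ((X, 0) : T × N) v • J B + g (J ((X, 0) : T × N)) v • B)
  /-- the totally real distribution `D⊥` -/
  Dperp : Submodule A T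
  /-- the slant distribution `Dθ` -/
  Dtheta : Submodule A T
  orthogonal : ∀ X ∈ Dperp, ∀ Z ∈ Dtheta, g (X, (0 : N)) (Z, (0 : N)) = 0
  complementary : IsCompl Dperp Dtheta
  /-- `D⊥` is totally real: `J D⊥ ⊆ T⊥M` -/
  totally_real : ∀ X ∈ Dperp, (J (X, (0 : N))).1 = 0
  /-- the slant angle `θ`, with `θ ≠ 0, π/2` -/
  θ : ℝ
  theta_pos : 0 < θ
  theta_lt_half_pi : θ < Real.pi / 2
  /-- `Dθ` is slant with slant angle `θ`: `P² Z = −cos² θ • Z` -/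
  slant : ∀ Z ∈ Dtheta,
    (J ((J (Z, (0 : N))).1, (0 : N))).1 = (-(algebraMap ℝ A (Real.cos θ ^ 2))) • Z
  P_mem_Dtheta : ∀ Z ∈ Dtheta, (J (Z, (0 : N))).1 ∈ Dtheta
  /-- the orthogonal projection of `TM` onto `D⊥` -/
  projPerp : T →ₗ[A] T
  projPerp_mem : ∀ X, projPerp X ∈ Dperp
  projPerp_id : ∀ X ∈ Dperp, projPerp X = X
  projPerp_zero : ∀ Z ∈ Dtheta, projPerp Z = 0
  /-- the orthogonal projection of `TM` onto `Dθ` -/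
  projTheta : T →ₗ[A] T
  projTheta_mem : ∀ X, projTheta X ∈ Dtheta
  projTheta_id : ∀ Z ∈ Dtheta, projTheta Z = Z
  projTheta_zero : ∀ X ∈ Dperp, projTheta X = 0
  /-- the set of lifts to `M = Mθ ×_λ M⊥` of vector fields on the second factor `M⊥` -/
  Lperp : Set T
  /-- the set of lifts to `M = Mθ ×_λ M⊥` of vector fields on the first factor `Mθ` -/
  Ltheta : Set T
  Lperp_sub : ∀ X ∈ Lperp, X ∈ Dperp
  Ltheta_sub : ∀ Z ∈ Ltheta, Z ∈ Dtheta
  Lperp_span : Submodule.span A Lperp = Dperp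
  Ltheta_span : Submodule.span A Ltheta = Dtheta
  /-- `ln λ`, where `λ : Mθ → (0,∞)` is the warping function -/
  lnlam : A
  /-- `λ` is (the lift of) a function on the first factor `Mθ` -/
  lnlam_base : ∀ X ∈ Lperp, D X lnlam = 0
  /-- the (lift of the) gradient vector field `grad (ln λ)` -/
  gradlnlam : T
  gradlnlam_spec : ∀ X : T, g (gradlnlam, (0 : N)) (X, (0 : N)) = D X lnlam
  /-- the warped product identity `∇_X Z = ∇_Z X = Z(ln λ) X` -/
  warp_mixed : ∀ X ∈ Lperp, ∀ Z ∈ Ltheta,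
    (nablaAmb X (Z, (0 : N))).1 = D Z lnlam • X ∧
      (nablaAmb Z (X, (0 : N))).1 = D Z lnlam • X
  /-- the leaves of `Dθ` are totally geodesic in `M` -/
  warp_theta_geodesic : ∀ Z ∈ Ltheta, ∀ W ∈ Ltheta, (nablaAmb Z (W, (0 : N))).1 ∈ Dtheta
  /-- the leaves of `D⊥` are totally umbilic in `M` with mean curvature `−grad (ln λ)` -/
  warp_perp_umbilic : ∀ X ∈ Lperp, ∀ Y ∈ Lperp,
    (nablaAmb X (Y, (0 : N))).1 + g (X, (0 : N)) (Y, (0 : N)) • gradlnlam ∈ Dperp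

namespace WarpedProductHemiSlant

variable {A : Type*} [CommRing A] [Algebra ℝ A]
  {T : Type*} [AddCommGroup T] [Module A T]
  {N : Type*} [AddCommGroup N] [Module A N]

/-- The induced Levi-Civita connection `∇` of `M` (tangential part of the Gauss formula). -/
def nabla (S : WarpedProductHemiSlant A T N) (X Y : T) : T := (S.nablaAmb X (Y, 0)).1

/-- The second fundamental form `h` of `M` in `M̃` (normal part of the Gauss formula). -/
def h (S : WarpedProductHemiSlant A T N) (X Y : T) : N := (S.nablaAmb X (Y, 0)).2

/-- The shape operator `𝔄_ξ` of `M` in `M̃` (Weingarten formula). -/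
def shape (S : WarpedProductHemiSlant A T N) (ξ : N) (X : T) : T := -(S.nablaAmb X (0, ξ)).1

/-- The normal connection `∇⊥` of `M` in `M̃` (Weingarten formula). -/
def nablaPerp (S : WarpedProductHemiSlant A T N) (X : T) (ξ : N) : N := (S.nablaAmb X (0, ξ)).2

/-- The tangential part `P` of `J` on tangent vector fields. -/
def P (S : WarpedProductHemiSlant A T N) (X : T) : T := (S.J (X, 0)).1

/-- The normal part `F` of `J` on tangent vector fields. -/
def F (S : WarpedProductHemiSlant A T N) (X : T) : N := (S.J (X, 0)).2

end WarpedProductHemiSlant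

namespace WarpedProductHemiSlant

variable {A : Type*} [CommRing A] [Algebra ℝ A]
  {T : Type*} [AddCommGroup T] [Module A T]
  {N : Type*} [AddCommGroup N] [Module A N]

section PairLemmas

lemma mk_smul_T (a : A) (x : T) : ((a • x, (0:N)) : T × N) = a • ((x, 0) : T × N) := by
  simp

lemma mk_smul_N (a : A) (ξ : N) : (((0:T), a • ξ) : T × N) = a • (((0:T), ξ) : T × N) := by
  simp

lemma mk_add_T (x y : T) : ((x + y, (0:N)) : T × N) = ((x, 0) : T × N) + ((y, 0) : T × N) := by
  simp

lemma mk_add_N (ξ η : N) : (((0:T), ξ + η) : T × N) = (((0:T), ξ) : T × N) + (((0:T), η) : T × N) := by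
  simp

end PairLemmas

variable (S : WarpedProductHemiSlant A T N)

lemma g_zero_left (v : T × N) : S.g 0 v = 0 := by
  have h := S.g_smul_left 0 v v
  rwa [zero_smul, zero_mul] at h

lemma g_zero_right (u : T × N) : S.g u 0 = 0 := by
  rw [S.g_symm]; exact S.g_zero_left u

lemma g_mk00_right (u : T × N) : S.g u (((0:T), (0:N)) : T × N) = 0 := S.g_zero_right u

lemma g_mk00_left (u : T × N) : S.g (((0:T), (0:N)) : T × N) u = 0 := S.g_zero_left u

lemma g_add_right (u v w : T × N) : S.g u (v + w) = S.g u v + S.g u w := by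
  rw [S.g_symm, S.g_add_left, S.g_symm v u, S.g_symm w u]

lemma g_smul_right (a : A) (u v : T × N) : S.g u (a • v) = a * S.g u v := by
  rw [S.g_symm, S.g_smul_left, S.g_symm]

lemma g_neg_right (u v : T × N) : S.g u (-v) = - S.g u v := by
  rw [← neg_one_smul A v, S.g_smul_right, neg_one_mul]

lemma g_neg_left (u v : T × N) : S.g (-u) v = - S.g u v := by
  rw [S.g_symm, S.g_neg_right, S.g_symm]

lemma g_sub_right (u v w : T × N) : S.g u (v - w) = S.g u v - S.g u w := by
  rw [sub_eq_add_neg, S.g_add_right, S.g_neg_right, ← sub_eq_add_neg]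

lemma g_sub_left (u v w : T × N) : S.g (u - v) w = S.g u w - S.g v w := by
  rw [S.g_symm, S.g_sub_right, S.g_symm u w, S.g_symm v w]

lemma g_normal_tangent (ξ : N) (X : T) : S.g (0, ξ) (X, 0) = 0 := by
  rw [S.g_symm]; exact S.g_tangent_normal X ξ

lemma g_split (a c : T) (b d : N) :
    S.g (a, b) (c, d) = S.g (a, 0) (c, 0) + S.g (0, b) (0, d) := by
  have h1 : ((a, b) : T × N) = (a, 0) + (0, b) := by simp
  have h2 : ((c, d) : T × N) = (c, 0) + (0, d) := by simp
  rw [h1, h2, S.g_add_left, S.g_add_right, S.g_add_right,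
    S.g_tangent_normal, S.g_normal_tangent]
  ring

lemma gJ_left (u v : T × N) : S.g (S.J u) v = - S.g u (S.J v) := by
  have h := S.J_isometry u (S.J v)
  rw [S.J_sq v, S.g_neg_right] at h
  exact neg_eq_iff_eq_neg.mp h

lemma gJ_right (u v : T × N) : S.g u (S.J v) = - S.g (S.J u) v := by
  rw [S.gJ_left, neg_neg]

lemma D_zero (X : T) : S.D X 0 = 0 := by
  have h := S.D_add X 0 0
  rw [add_zero] at h
  exact (left_eq_add.mp h)

lemma D_const_mul (X : T) (r : ℝ) (a : A) :
    S.D X (algebraMap ℝ A r * a) = algebraMap ℝ A r * S.D X a := by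
  rw [S.D_mul, S.D_const, mul_zero, add_zero]

lemma nabla_pair (X Z : T) : S.nablaAmb X (Z, 0) = (S.nabla X Z, S.h X Z) := rfl

lemma J_pair (Z : T) : S.J (Z, 0) = (S.P Z, S.F Z) := rfl

lemma J_perp {X : T} (hX : X ∈ S.Dperp) : S.J (X, 0) = (0, S.F X) :=
  Prod.ext (S.totally_real X hX) rfl

lemma FW_pair (W : T) : (((0:T), S.F W) : T × N) = S.J (W, 0) - ((S.P W, (0:N)) : T × N) := by
  rw [S.J_pair, Prod.mk_sub_mk, sub_self, sub_zero]

lemma h_smul_left (a : A) (U W : T) : S.h (a • U) W = a • S.h U W := by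
  show (S.nablaAmb (a • U) (W, 0)).2 = a • (S.nablaAmb U (W, 0)).2
  rw [S.nablaAmb_smul_vec]
  rfl

lemma h_add_left (U V W : T) : S.h (U + V) W = S.h U W + S.h V W := by
  show (S.nablaAmb (U + V) (W, 0)).2 = (S.nablaAmb U (W, 0)).2 + (S.nablaAmb V (W, 0)).2
  rw [S.nablaAmb_add_vec]
  rfl

lemma h_smul_right (a : A) (U W : T) : S.h U (a • W) = a • S.h U W := by
  show (S.nablaAmb U (a • W, 0)).2 = a • (S.nablaAmb U (W, 0)).2
  rw [mk_smul_T, S.nablaAmb_smul]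
  simp

lemma h_add_right (U W V : T) : S.h U (W + V) = S.h U W + S.h U V := by
  show (S.nablaAmb U (W + V, 0)).2 = (S.nablaAmb U (W, 0)).2 + (S.nablaAmb U (V, 0)).2
  rw [mk_add_T, S.nablaAmb_add]
  rfl

lemma h_zero_right (U : T) : S.h U 0 = 0 := by
  have h := S.h_smul_right 0 U 0
  rwa [zero_smul, zero_smul] at h

lemma h_zero_left (U : T) : S.h 0 U = 0 := by
  have h := S.h_smul_left 0 0 U
  rwa [zero_smul, zero_smul] at h

lemma P_smul (a : A) (U : T) : S.P (a • U) = a • S.P U := by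
  show (S.J (a • U, 0)).1 = a • (S.J (U, 0)).1
  rw [mk_smul_T, map_smul]
  rfl

lemma P_add (U V : T) : S.P (U + V) = S.P U + S.P V := by
  show (S.J (U + V, 0)).1 = (S.J (U, 0)).1 + (S.J (V, 0)).1
  rw [mk_add_T, map_add]
  rfl

lemma P_zero : S.P (0 : T) = 0 := by
  have h := S.P_smul 0 0
  rwa [zero_smul, zero_smul] at h

lemma nablaAmb_neg (X : T) (v : T × N) : S.nablaAmb X (-v) = - S.nablaAmb X v := by
  have hD : S.D X (-1 : A) = 0 := by
    rw [show (-1 : A) = algebraMap ℝ A (-1) by rw [map_neg, map_one]]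
    exact S.D_const X (-1)
  have h := S.nablaAmb_smul X (-1 : A) v
  rw [neg_one_smul, neg_one_smul, hD, zero_smul, zero_add] at h
  exact h

lemma nablaAmb_sub (X : T) (u v : T × N) :
    S.nablaAmb X (u - v) = S.nablaAmb X u - S.nablaAmb X v := by
  rw [sub_eq_add_neg, S.nablaAmb_add, S.nablaAmb_neg, ← sub_eq_add_neg]

/-- metric identity: `g(W, ∇̄_U ξ) = − g(h(U,W), ξ)` (Weingarten / shape operator relation). -/
lemma g_nablaPerp (U W : T) (ξ : N) :
    S.g (W, 0) (S.nablaAmb U (0, ξ)) = - S.g (0, S.h U W) (0, ξ) := by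
  have hm := S.nablaAmb_metric U ((W, (0:N)) : T × N) (((0:T), ξ) : T × N)
  rw [S.g_tangent_normal, S.D_zero, S.nabla_pair, S.g_split, S.g_mk00_right, zero_add] at hm
  linear_combination -hm

/-- For lifts, `X(g(Z,W)) = 0`. -/
lemma DX_g_lifts {X Z W : T} (hX : X ∈ S.Lperp) (hZ : Z ∈ S.Ltheta) (hW : W ∈ S.Ltheta) :
    S.D X (S.g (Z, 0) (W, 0)) = 0 := by
  have hXD := S.Lperp_sub X hX
  have hZD := S.Ltheta_sub Z hZ
  have hWD := S.Ltheta_sub W hW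
  have e1 : S.g (S.nablaAmb X ((Z, (0:N)) : T × N)) ((W, (0:N)) : T × N) = 0 := by
    rw [S.nabla_pair, S.g_split, S.g_mk00_right, add_zero,
      show S.nabla X Z = S.D Z S.lnlam • X from (S.warp_mixed X hX Z hZ).1,
      mk_smul_T, S.g_smul_left, S.orthogonal X hXD W hWD, mul_zero]
  have e2 : S.g ((Z, (0:N)) : T × N) (S.nablaAmb X ((W, (0:N)) : T × N)) = 0 := by
    rw [S.nabla_pair, S.g_split, S.g_mk00_left, add_zero,
      show S.nabla X W = S.D W S.lnlam • X from (S.warp_mixed X hX W hW).1,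
      mk_smul_T, S.g_smul_right,
      show S.g ((Z, (0:N)) : T × N) ((X, (0:N)) : T × N) = 0 by
        rw [S.g_symm]; exact S.orthogonal X hXD Z hZD, mul_zero]
  have hm := S.nablaAmb_metric X ((Z, (0:N)) : T × N) ((W, (0:N)) : T × N)
  rw [e1, e2, add_zero] at hm
  exact hm

/-- `g(PV, U) = − g(PU, V)`. -/
lemma gP_antisymm (U V : T) :
    S.g (S.P V, 0) ((U, (0:N)) : T × N) = - S.g (S.P U, 0) ((V, (0:N)) : T × N) := by
  have h3 := S.gJ_left ((V, (0:N)) : T × N) ((U, (0:N)) : T × N)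
  rw [S.J_pair, S.J_pair, S.g_split, S.g_mk00_right, add_zero] at h3
  have h4 : S.g ((V, (0:N)) : T × N) ((S.P U, S.F U) : T × N)
      = S.g (S.P U, 0) ((V, (0:N)) : T × N) := by
    rw [S.g_split, S.g_mk00_left, add_zero, S.g_symm]
  rw [h4] at h3
  exact h3

/-- `g(PZ, PW) = cos²θ · g(Z,W)` for `W ∈ Dθ`. -/
lemma gPP {Z W : T} (hW : W ∈ S.Dtheta) :
    S.g (S.P Z, 0) ((S.P W, (0:N)) : T × N)
      = algebraMap ℝ A (Real.cos S.θ ^ 2) * S.g (Z, 0) (W, 0) := by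
  have h1 : S.g (S.J ((Z, (0:N)) : T × N)) ((S.P W, (0:N)) : T × N)
      = S.g (S.P Z, 0) ((S.P W, (0:N)) : T × N) := by
    rw [S.J_pair, S.g_split, S.g_mk00_right, add_zero]
  have h2 := S.gJ_left ((Z, (0:N)) : T × N) ((S.P W, (0:N)) : T × N)
  have h3 : S.J ((S.P W, (0:N)) : T × N)
      = (((-(algebraMap ℝ A (Real.cos S.θ ^ 2))) • W, S.F (S.P W)) : T × N) :=
    Prod.ext (S.slant W hW) rfl
  have h5 : S.g ((Z, (0:N)) : T × N) (S.J ((S.P W, (0:N)) : T × N))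
      = -(algebraMap ℝ A (Real.cos S.θ ^ 2) * S.g (Z, 0) (W, 0)) := by
    rw [h3, S.g_split, S.g_mk00_left, add_zero, mk_smul_T, S.g_smul_right, neg_mul]
  linear_combination -h1 + h2 - h5

/-- **Key identity** (direction `Z` route): for `X ∈ L(M⊥)`, `Z ∈ L(Mθ)`, `W ∈ Dθ`,
`g(h(X,Z),FW) = g(h(Z,W),FX) + ½(ω(FX) g(Z,W) − ω(X) g(PZ,W))`. -/
lemma key1 {X Z W : T} (hX : X ∈ S.Lperp) (hZ : Z ∈ S.Ltheta) (hW : W ∈ S.Dtheta) :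
    S.g (0, S.h X Z) (0, S.F W)
      = S.g (0, S.h Z W) (0, S.F X)
        + algebraMap ℝ A (1/2) *
            (S.g S.B (0, S.F X) * S.g (Z, 0) (W, 0)
              - S.g S.B (X, 0) * S.g (S.P Z, 0) (W, 0)) := by
  have hXD := S.Lperp_sub X hX
  have hZD := S.Ltheta_sub Z hZ
  -- h1 : g(∇̄_Z X, FW) = g(h(X,Z), FW)
  have h1 : S.g (S.nablaAmb Z ((X, (0:N)) : T × N)) (((0:T), S.F W) : T × N)
      = S.g (0, S.h X Z) (0, S.F W) := by
    rw [S.nabla_pair, S.g_split, S.g_mk00_right, zero_add,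
      show S.h Z X = S.h X Z from S.h_symm Z X]
  -- h2' : split FW = J W − PW
  have h2' := congrArg (S.g (S.nablaAmb Z ((X, (0:N)) : T × N))) (S.FW_pair W)
  rw [S.g_sub_right] at h2'
  -- h3 : g(∇̄_Z X, PW) = 0
  have h3 : S.g (S.nablaAmb Z ((X, (0:N)) : T × N)) ((S.P W, (0:N)) : T × N) = 0 := by
    rw [S.nabla_pair, S.g_split, S.g_mk00_right, add_zero,
      show S.nabla Z X = S.D Z S.lnlam • X from (S.warp_mixed X hX Z hZ).2,
      mk_smul_T, S.g_smul_left, S.orthogonal X hXD (S.P W) (S.P_mem_Dtheta W hW), mul_zero]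
  -- h4 : move J
  have h4 := S.gJ_right (S.nablaAmb Z ((X, (0:N)) : T × N)) ((W, (0:N)) : T × N)
  -- h5 : lcK identity paired with W
  have h5 := congrArg (fun u => S.g u ((W, (0:N)) : T × N))
    (S.lck_identity Z ((X, (0:N)) : T × N))
  rw [S.g_add_left, S.g_smul_left, S.g_add_left, S.g_add_left, S.g_sub_left,
    S.g_smul_left, S.g_smul_left, S.g_smul_left, S.g_smul_left,
    show S.g ((Z, (0:N)) : T × N) ((X, (0:N)) : T × N) = 0 by
      rw [S.g_symm]; exact S.orthogonal X hXD Z hZD,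
    show S.g (S.J ((Z, (0:N)) : T × N)) ((X, (0:N)) : T × N) = 0 by
      rw [S.J_pair, S.g_split, S.g_mk00_right, add_zero, S.g_symm]
      exact S.orthogonal X hXD (S.P Z) (S.P_mem_Dtheta Z hZD),
    S.J_perp hXD,
    show S.g (S.J ((Z, (0:N)) : T × N)) ((W, (0:N)) : T × N)
        = S.g (S.P Z, 0) ((W, (0:N)) : T × N) by
      rw [S.J_pair, S.g_split, S.g_mk00_right, add_zero]] at h5
  -- h7 : g(∇̄_Z (0,FX), W) = −g(h(Z,W), FX)
  have h7 : S.g (S.nablaAmb Z (((0:T), S.F X) : T × N)) ((W, (0:N)) : T × N)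
      = - S.g (0, S.h Z W) (0, S.F X) := by
    rw [S.g_symm]; exact S.g_nablaPerp Z W (S.F X)
  linear_combination -h1 + h2' - h3 + h4 + h5 - h7

/-- Extension of `key1` to arbitrary `U ∈ Dθ` in the first slot, by `A`-linearity. -/
lemma key1' {X W : T} (hX : X ∈ S.Lperp) (hW : W ∈ S.Dtheta) :
    ∀ U ∈ S.Dtheta,
      S.g (0, S.h X U) (0, S.F W)
        = S.g (0, S.h U W) (0, S.F X)
          + algebraMap ℝ A (1/2) *
              (S.g S.B (0, S.F X) * S.g (U, 0) (W, 0)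
                - S.g S.B (X, 0) * S.g (S.P U, 0) (W, 0)) := by
  intro U hU
  rw [← S.Ltheta_span] at hU
  induction hU using Submodule.span_induction with
  | mem x hx => exact S.key1 hX hx hW
  | zero =>
    simp only [S.h_zero_right, S.h_zero_left, S.P_zero, S.g_mk00_left]
    ring
  | add x y hxm hym ihx ihy =>
    rw [S.h_add_right, S.h_add_left, S.P_add, mk_add_N, mk_add_N, mk_add_T, mk_add_T,
      S.g_add_left, S.g_add_left, S.g_add_left, S.g_add_left]
    linear_combination ihx + ihy
  | smul a x hxm ihx =>
    rw [S.h_smul_right, S.h_smul_left, S.P_smul, mk_smul_N, mk_smul_N, mk_smul_T, mk_smul_T,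
      S.g_smul_left, S.g_smul_left, S.g_smul_left, S.g_smul_left]
    linear_combination a * ihx

/-- The skew part: `g(h(X,U),FV) − g(h(X,V),FU) = −ω(X) g(PU,V)` for `U, V ∈ Dθ`. -/
lemma phi_formula {X U V : T} (hX : X ∈ S.Lperp) (hU : U ∈ S.Dtheta) (hV : V ∈ S.Dtheta) :
    S.g (0, S.h X U) (0, S.F V) - S.g (0, S.h X V) (0, S.F U)
      = - (S.g S.B (X, 0) * S.g (S.P U, 0) ((V, (0:N)) : T × N)) := by
  have h1 := S.key1' hX hV U hU
  have h2 := S.key1' hX hU V hV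
  rw [show S.h V U = S.h U V from S.h_symm V U,
    S.gP_antisymm U V,
    S.g_symm ((V, (0:N)) : T × N) ((U, (0:N)) : T × N)] at h2
  have hhalf : (algebraMap ℝ A (1/2)) * 2 = 1 := by
    rw [show ((2:A)) = algebraMap ℝ A 2 from (map_ofNat (algebraMap ℝ A) 2).symm, ← map_mul]
    norm_num
  linear_combination h1 - h2
    - (S.g S.B ((X, (0:N)) : T × N) * S.g ((S.P U, (0:N)) : T × N) ((V, (0:N)) : T × N)) * hhalf

/-- The skew part against `P`-shifted arguments equals a shape-operator type term. -/
lemma phiP {X Z W : T} (hX : X ∈ S.Lperp) (hZ : Z ∈ S.Ltheta) (hW : W ∈ S.Ltheta) :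
    S.g (0, S.h X Z) (0, S.F (S.P W)) - S.g (0, S.h X (S.P W)) (0, S.F Z)
      = - S.g ((S.P W, (0:N)) : T × N) (S.nablaAmb X ((S.P Z, (0:N)) : T × N)) := by
  have hXD := S.Lperp_sub X hX
  have hZD := S.Ltheta_sub Z hZ
  have hWD := S.Ltheta_sub W hW
  -- he : g(PW, J ∇̄_X Z) = −g(h(X,Z), F(PW))
  have he : S.g ((S.P W, (0:N)) : T × N) (S.J (S.nablaAmb X ((Z, (0:N)) : T × N)))
      = - S.g (0, S.h X Z) (0, S.F (S.P W)) := by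
    rw [S.gJ_right, neg_inj,
      show S.J ((S.P W, (0:N)) : T × N)
          = (((-(algebraMap ℝ A (Real.cos S.θ ^ 2))) • W, S.F (S.P W)) : T × N) from
        Prod.ext (S.slant W hWD) rfl,
      S.nabla_pair, S.g_split, mk_smul_T, S.g_smul_left,
      show S.nabla X Z = S.D Z S.lnlam • X from (S.warp_mixed X hX Z hZ).1,
      mk_smul_T, S.g_smul_right,
      show S.g ((W, (0:N)) : T × N) ((X, (0:N)) : T × N) = 0 by
        rw [S.g_symm]; exact S.orthogonal X hXD W hWD,
      mul_zero, mul_zero, zero_add]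
    exact S.g_symm _ _
  have ha := S.g_nablaPerp X (S.P W) (S.F Z)
  rw [show S.nablaAmb X (((0:T), S.F Z) : T × N)
        = S.nablaAmb X (S.J ((Z, (0:N)) : T × N)) - S.nablaAmb X ((S.P Z, (0:N)) : T × N) from by
      rw [← S.nablaAmb_sub, ← S.FW_pair],
    S.g_sub_right,
    S.lck_identity X ((Z, (0:N)) : T × N),
    S.g_add_right, S.g_smul_right, S.g_add_right, S.g_add_right, S.g_sub_right,
    S.g_smul_right, S.g_smul_right, S.g_smul_right, S.g_smul_right,
    S.J_perp hXD,
    show S.g ((S.P W, (0:N)) : T × N) ((X, (0:N)) : T × N) = 0 by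
      rw [S.g_symm]; exact S.orthogonal X hXD (S.P W) (S.P_mem_Dtheta W hWD),
    S.g_tangent_normal (S.P W) (S.F X),
    S.orthogonal X hXD Z hZD,
    S.g_normal_tangent (S.F X) Z,
    he] at ha
  linear_combination -ha

/-- Antisymmetry of `g(∇̄_X PZ, PW)` in `(Z, W)` for lifts. -/
lemma cprime_antisymm {X Z W : T} (hX : X ∈ S.Lperp) (hZ : Z ∈ S.Ltheta) (hW : W ∈ S.Ltheta) :
    S.g ((S.P W, (0:N)) : T × N) (S.nablaAmb X ((S.P Z, (0:N)) : T × N))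
      + S.g ((S.P Z, (0:N)) : T × N) (S.nablaAmb X ((S.P W, (0:N)) : T × N)) = 0 := by
  have hWD := S.Ltheta_sub W hW
  have hm := S.nablaAmb_metric X ((S.P Z, (0:N)) : T × N) ((S.P W, (0:N)) : T × N)
  rw [S.gPP hWD, S.D_const_mul, S.DX_g_lifts hX hZ hW, mul_zero] at hm
  have hsy := S.g_symm (S.nablaAmb X ((S.P Z, (0:N)) : T × N)) ((S.P W, (0:N)) : T × N)
  linear_combination -hm - hsy

/-- The crucial vanishing: `ω(X) g(Z,W) = 0` for lifts. -/
lemma vanish_lifts {X Z W : T} (hX : X ∈ S.Lperp) (hZ : Z ∈ S.Ltheta) (hW : W ∈ S.Ltheta) :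
    S.g S.B ((X, (0:N)) : T × N) * S.g ((Z, (0:N)) : T × N) ((W, (0:N)) : T × N) = 0 := by
  have hZD := S.Ltheta_sub Z hZ
  have hWD := S.Ltheta_sub W hW
  have hPWD : S.P W ∈ S.Dtheta := S.P_mem_Dtheta W hWD
  have hPZD : S.P Z ∈ S.Dtheta := S.P_mem_Dtheta Z hZD
  have h1 := S.phi_formula hX hZD hPWD
  have h2 := S.phi_formula hX hWD hPZD
  rw [S.gPP hWD] at h1
  rw [S.gPP hZD] at h2
  have h3 := S.phiP hX hZ hW
  have h4 := S.phiP hX hW hZ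
  have h5 := S.cprime_antisymm hX hZ hW
  have hsym := S.g_symm ((Z, (0:N)) : T × N) ((W, (0:N)) : T × N)
  have hsum : algebraMap ℝ A (Real.cos S.θ ^ 2) *
        (S.g S.B ((X, (0:N)) : T × N) * S.g ((Z, (0:N)) : T × N) ((W, (0:N)) : T × N))
      + algebraMap ℝ A (Real.cos S.θ ^ 2) *
        (S.g S.B ((X, (0:N)) : T × N) * S.g ((Z, (0:N)) : T × N) ((W, (0:N)) : T × N)) = 0 := by
    linear_combination h1 - h3 + h2 - h4 + h5
      + (S.g S.B ((X, (0:N)) : T × N) * algebraMap ℝ A (Real.cos S.θ ^ 2)) * hsym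
  have hcos : Real.cos S.θ ≠ 0 := by
    have hpi := Real.pi_pos
    exact ne_of_gt (Real.cos_pos_of_mem_Ioo ⟨by linarith [S.theta_pos], S.theta_lt_half_pi⟩)
  have hc2 : Real.cos S.θ ^ 2 ≠ 0 := pow_ne_zero _ hcos
  have hinv : algebraMap ℝ A (1 / (2 * Real.cos S.θ ^ 2)) *
      (algebraMap ℝ A (Real.cos S.θ ^ 2) + algebraMap ℝ A (Real.cos S.θ ^ 2)) = 1 := by
    rw [← map_add, ← map_mul,
      show 1 / (2 * Real.cos S.θ ^ 2) * (Real.cos S.θ ^ 2 + Real.cos S.θ ^ 2) = 1 by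
        field_simp; ring, map_one]
  linear_combination (algebraMap ℝ A (1 / (2 * Real.cos S.θ ^ 2))) * hsum
    - (S.g S.B ((X, (0:N)) : T × N) * S.g ((Z, (0:N)) : T × N) ((W, (0:N)) : T × N)) * hinv

/-- Extension of the vanishing to all of `Dθ × Dθ`. -/
lemma vanish {X : T} (hX : X ∈ S.Lperp) :
    ∀ U ∈ S.Dtheta, ∀ V ∈ S.Dtheta,
      S.g S.B ((X, (0:N)) : T × N) * S.g ((U, (0:N)) : T × N) ((V, (0:N)) : T × N) = 0 := by
  have step1 : ∀ Z ∈ S.Ltheta, ∀ V ∈ S.Dtheta,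
      S.g S.B ((X, (0:N)) : T × N) * S.g ((Z, (0:N)) : T × N) ((V, (0:N)) : T × N) = 0 := by
    intro Z hZ V hV
    rw [← S.Ltheta_span] at hV
    induction hV using Submodule.span_induction with
    | mem x hx => exact S.vanish_lifts hX hZ hx
    | zero => rw [S.g_mk00_right, mul_zero]
    | add x y hxm hym ihx ihy => rw [mk_add_T, S.g_add_right, mul_add, ihx, ihy, add_zero]
    | smul a x hxm ihx => rw [mk_smul_T, S.g_smul_right, mul_left_comm, ihx, mul_zero]
  intro U hU
  rw [← S.Ltheta_span] at hU
  induction hU using Submodule.span_induction with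
  | mem x hx => exact step1 x hx
  | zero => intro V hV; rw [S.g_mk00_left, mul_zero]
  | add x y hxm hym ihx ihy =>
    intro V hV
    rw [mk_add_T, S.g_add_left, mul_add, ihx V hV, ihy V hV, add_zero]
  | smul a x hxm ihx =>
    intro V hV
    rw [mk_smul_T, S.g_smul_left, mul_left_comm, ihx V hV, mul_zero]

end WarpedProductHemiSlant

/-- Let `M = Mθ ×_λ M⊥` be a warped product hemi-slant submanifold of an lcK manifold. Then for all `X ∈ L(M⊥)` and `Z, W ∈ L(Mθ)`, `g(h(X,Z), FW) = g(h(X,W), FZ)`. -/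
theorem WarpedProductHemiSlant.g_h_F_symm {A : Type*} [CommRing A] [Algebra ℝ A]
    {T : Type*} [AddCommGroup T] [Module A T]
    {N : Type*} [AddCommGroup N] [Module A N]
    (S : WarpedProductHemiSlant A T N) {X Z W : T}
    (hX : X ∈ S.Lperp) (hZ : Z ∈ S.Ltheta) (hW : W ∈ S.Ltheta) :
    S.g (0, S.h X Z) (0, S.F W) = S.g (0, S.h X W) (0, S.F Z) := by
  have hZD := S.Ltheta_sub Z hZ
  have hWD := S.Ltheta_sub W hW
  have h1 := S.phi_formula hX hZD hWD
  have hPZD : S.P Z ∈ S.Dtheta := S.P_mem_Dtheta Z hZD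
  have h2 := S.vanish hX (S.P Z) hPZD W hWD
  linear_combination h1 - h2
end
end
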